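/- arXiv:1603.02188 — 2 statements merged into one kernel-verified Lean document; each statement's English description precedes it below -/
import Mathlib

section
/- Let n ≥ 2, 0 < α ≤ ln(10/9), and 1/4 ≤ λ ≤ 1. For i ∈ {1,…,n} define pᵢ = (2i−1)/n², â = e^α − 1, ǎ = 1 − e^{−α}, δ̂ᵢ = λn·((1/n)·(1 − α/n) − pᵢ·â/α), and δ̌ᵢ = λn·((1/n)·(1 + α/n) − pᵢ·ǎ/α). Then max(|δ̂ᵢ|, |δ̌ᵢ|) ≤ (5/4)·λ for every i. -/
set_option maxHeartbeats 1000000 in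
theorem delta_bounds (n : ℕ) (hn : 2 ≤ n) (α lam : ℝ)
    (hα0 : 0 < α) (hα : α ≤ Real.log (10 / 9))
    (hlam0 : 1 / 4 ≤ lam) (hlam1 : lam ≤ 1)
    (i : ℕ) (hi1 : 1 ≤ i) (hin : i ≤ n) :
    max |lam * n * ((1 / n) * (1 - α / n)
          - ((2 * i - 1 : ℝ) / (n : ℝ) ^ 2) * ((Real.exp α - 1) / α))|
        |lam * n * ((1 / n) * (1 + α / n)
          - ((2 * i - 1 : ℝ) / (n : ℝ) ^ 2) * ((1 - Real.exp (-α)) / α))|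
      ≤ (5 / 4) * lam := by
  have hN2 : (2:ℝ) ≤ (n:ℝ) := by exact_mod_cast hn
  have hN0 : (0:ℝ) < (n:ℝ) := by linarith
  have hNne : (n:ℝ) ≠ 0 := ne_of_gt hN0
  have hαne : α ≠ 0 := ne_of_gt hα0
  set N : ℝ := (n:ℝ)
  set m : ℝ := 2 * (i:ℝ) - 1 with hm
  have hm1 : (1:ℝ) ≤ m := by
    have : (1:ℝ) ≤ (i:ℝ) := by exact_mod_cast hi1
    simp [hm]; linarith
  have hm2 : m ≤ 2 * N - 1 := by
    have : (i:ℝ) ≤ N := by simp only [N]; exact_mod_cast hin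
    simp [hm]; linarith
  have hlog : Real.log (10/9) ≤ 1/4 := by
    rw [Real.log_le_iff_le_exp (by norm_num)]
    nlinarith [Real.add_one_le_exp (1/4 : ℝ)]
  have hα4 : α ≤ 1/4 := le_trans hα hlog
  have ha1 : 1 + α ≤ Real.exp α := by
    have := Real.add_one_le_exp α; linarith
  have ha2 : Real.exp α ≤ 10/9 := by
    calc Real.exp α ≤ Real.exp (Real.log (10/9)) := Real.exp_le_exp.mpr hα
    _ = 10/9 := Real.exp_log (by norm_num)
  have hb0 : 0 < Real.exp (-α) := Real.exp_pos _
  have hb1 : 1 - α ≤ Real.exp (-α) := by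
    have := Real.add_one_le_exp (-α); linarith
  have hb2 : Real.exp (-α) < 1 := Real.exp_lt_one_iff.mpr (by linarith)
  have hlam : (0:ℝ) < lam := by linarith
  set A : ℝ := (Real.exp α - 1) / α with hA
  set B : ℝ := (1 - Real.exp (-α)) / α with hB
  have hA1 : 1 ≤ A := by
    rw [hA, le_div_iff₀ hα0]; linarith
  have hA2 : A ≤ 10/9 := by
    rw [hA, div_le_iff₀ hα0]
    -- e^α - 1 = e^α (1 - e^{-α}) ≤ e^α * α ≤ (10/9) α
    have hmul : Real.exp α * Real.exp (-α) = 1 := by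
      rw [← Real.exp_add]; simp
    nlinarith [Real.exp_pos α]
  have hB0 : 0 < B := div_pos (by linarith) hα0
  have hB1 : B ≤ 1 := by
    rw [hB, div_le_iff₀ hα0]; linarith
  -- rewrite the two expressions
  have e1 : lam * N * ((1 / N) * (1 - α / N) - (m / N ^ 2) * A)
      = lam * (1 - (α + m * A) / N) := by
    field_simp; ring
  have e2 : lam * N * ((1 / N) * (1 + α / N) - (m / N ^ 2) * B)
      = lam * (1 + (α - m * B) / N) := by
    field_simp; ring
  rw [e1, e2]
  have hmA0 : 0 ≤ m * A := by nlinarith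
  have hmB0 : 0 ≤ m * B := by nlinarith
  have hs1 : (α + m * A) / N ≤ 9/4 := by
    rw [div_le_iff₀ hN0]
    have h1 : m * A ≤ m * (10/9) :=
      mul_le_mul_of_nonneg_left hA2 (by linarith)
    have h2 : m * (10/9) ≤ (2 * N - 1) * (10/9) :=
      mul_le_mul_of_nonneg_right hm2 (by norm_num)
    linarith
  have hs0 : 0 ≤ (α + m * A) / N := div_nonneg (by linarith) (le_of_lt hN0)
  have ht1 : (α - m * B) / N ≤ 1/4 := by
    rw [div_le_iff₀ hN0]
    nlinarith [hmB0, hα4, hN2]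
  have ht2 : -(9/4) ≤ (α - m * B) / N := by
    rw [le_div_iff₀ hN0]
    have h1 : m * B ≤ m * 1 := mul_le_mul_of_nonneg_left hB1 (by linarith)
    nlinarith
  apply max_le <;> rw [abs_le] <;> constructor <;>
    linarith [mul_le_mul_of_nonneg_left hs1 (le_of_lt hlam),
      mul_le_mul_of_nonneg_left hs0 (le_of_lt hlam),
      mul_le_mul_of_nonneg_left ht1 (le_of_lt hlam),
      mul_le_mul_of_nonneg_left ht2 (le_of_lt hlam)]
end

section
/- Let n ≥ 4 be divisible by 4 and pᵢ = (2i−1)/n². Suppose ∑_{i > 3n/4} pᵢ ≥ 1/4 + ε for some ε > 0. Then for any nonincreasing sequence Φ₁ ≥ … ≥ Φ_n ≥ 0 with sum Φ₊ = ∑ᵢ Φᵢ, it holds that ∑_{i ≤ 3n/4} pᵢ·Φᵢ ≤ (1 − (4ε/3))·Φ₊/n; in particular ∑_{i ≤ 3n/4} pᵢ·Φᵢ ≤ (1 − 2ε')·Φ₊/n for ε' = 2ε/3. -/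
open Finset

lemma sum_odd_real (m : ℕ) : ∑ i ∈ Finset.Icc 1 m, (2 * (i : ℝ) - 1) = (m : ℝ) ^ 2 := by
  induction m with
  | zero => simp
  | succ m ih =>
      rw [Finset.sum_Icc_succ_top (by omega), ih]
      push_cast
      ring

theorem bulk_left (n : ℕ) (hn : 4 ≤ n) (hdvd : 4 ∣ n) (ε : ℝ) (hε : 0 < ε)
    (hp : (1 / 4 : ℝ) + ε ≤
      ∑ i ∈ Finset.Icc (3 * n / 4 + 1) n, (2 * (i : ℝ) - 1) / (n : ℝ) ^ 2)
    (Φ : ℕ → ℝ) (hmono : ∀ i j, 1 ≤ i → i ≤ j → j ≤ n → Φ j ≤ Φ i)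
    (hpos : ∀ i, 0 ≤ Φ i) :
    (∑ i ∈ Finset.Icc 1 (3 * n / 4), ((2 * (i : ℝ) - 1) / (n : ℝ) ^ 2) * Φ i
        ≤ (1 - 4 * ε / 3) * (∑ i ∈ Finset.Icc 1 n, Φ i) / n) ∧
    (∑ i ∈ Finset.Icc 1 (3 * n / 4), ((2 * (i : ℝ) - 1) / (n : ℝ) ^ 2) * Φ i
        ≤ (1 - 2 * (2 * ε / 3)) * (∑ i ∈ Finset.Icc 1 n, Φ i) / n) := by
  obtain ⟨k, rfl⟩ := hdvd
  have hk : 1 ≤ k := by omega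
  have hm : 3 * (4 * k) / 4 = 3 * k := by omega
  rw [hm] at hp ⊢
  have hK : (1 : ℝ) ≤ (k : ℝ) := by exact_mod_cast hk
  have hK0 : (0 : ℝ) < (k : ℝ) := by linarith
  -- evaluate the tail sum in hp
  have hsplit : ∑ i ∈ Finset.Icc (3 * k + 1) (4 * k), (2 * (i : ℝ) - 1)
      = (4 * (k : ℝ)) ^ 2 - (3 * (k : ℝ)) ^ 2 := by
    have h1 := sum_odd_real (3 * k)
    have h2 := sum_odd_real (4 * k)
    have : Finset.Icc 1 (3 * k) ∪ Finset.Icc (3 * k + 1) (4 * k) = Finset.Icc 1 (4 * k) := by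
      ext x; simp [Finset.mem_Icc, Finset.mem_union]; omega
    have hdisj : Disjoint (Finset.Icc 1 (3 * k)) (Finset.Icc (3 * k + 1) (4 * k)) := by
      rw [Finset.disjoint_left]; intro a ha hb
      simp [Finset.mem_Icc] at ha hb; omega
    have h3 : ∑ i ∈ Finset.Icc 1 (3 * k) ∪ Finset.Icc (3 * k + 1) (4 * k),
        (2 * (i : ℝ) - 1) = ∑ i ∈ Finset.Icc 1 (3 * k), (2 * (i : ℝ) - 1)
          + ∑ i ∈ Finset.Icc (3 * k + 1) (4 * k), (2 * (i : ℝ) - 1) :=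
      Finset.sum_union hdisj
    rw [this, h2, h1] at h3
    push_cast at h3 ⊢
    linarith
  have hn2 : ((4 * k : ℕ) : ℝ) ^ 2 = (4 * (k : ℝ)) ^ 2 := by push_cast; ring
  have hεle : ε ≤ 3 / 16 := by
    have : ∑ i ∈ Finset.Icc (3 * k + 1) (4 * k), (2 * (i : ℝ) - 1) / ((4 * k : ℕ) : ℝ) ^ 2
        = ((4 * (k : ℝ)) ^ 2 - (3 * (k : ℝ)) ^ 2) / (4 * (k : ℝ)) ^ 2 := by
      rw [← Finset.sum_div, hsplit, hn2]
    rw [this] at hp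
    have h16 : (0 : ℝ) < (4 * (k : ℝ)) ^ 2 := by positivity
    rw [le_div_iff₀ h16] at hp
    nlinarith
  -- Chebyshev
  have hanti : AntivaryOn (fun i : ℕ => (2 * (i : ℝ) - 1) / ((4 * k : ℕ) : ℝ) ^ 2) Φ
      ↑(Finset.Icc 1 (3 * k)) := by
    intro i hi j hj hΦ
    simp only [Finset.coe_Icc, Set.mem_Icc] at hi hj
    have hji : j ≤ i := by
      by_contra h
      exact absurd (hmono i j hi.1 (by omega) (by omega)) (by linarith)
    have : (j : ℝ) ≤ (i : ℝ) := by exact_mod_cast hji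
    have hden : (0 : ℝ) ≤ ((4 * k : ℕ) : ℝ) ^ 2 := by positivity
    apply div_le_div_of_nonneg_right ?_ ?_ |>.trans_eq rfl
    · linarith
    · push_cast; nlinarith
  have hcheb := hanti.card_mul_sum_le_sum_mul_sum
  rw [Nat.card_Icc] at hcheb
  simp only [Nat.add_sub_cancel] at hcheb
  have hsum_p : ∑ i ∈ Finset.Icc 1 (3 * k), (2 * (i : ℝ) - 1) / ((4 * k : ℕ) : ℝ) ^ 2
      = (3 * (k : ℝ)) ^ 2 / (4 * (k : ℝ)) ^ 2 := by
    rw [← Finset.sum_div, sum_odd_real, hn2]; push_cast; ring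
  rw [hsum_p] at hcheb
  have hsub : ∑ i ∈ Finset.Icc 1 (3 * k), Φ i ≤ ∑ i ∈ Finset.Icc 1 (4 * k), Φ i := by
    apply Finset.sum_le_sum_of_subset_of_nonneg
    · apply Finset.Icc_subset_Icc_right; omega
    · intro i _ _; exact hpos i
  have hS0 : 0 ≤ ∑ i ∈ Finset.Icc 1 (4 * k), Φ i :=
    Finset.sum_nonneg fun i _ => hpos i
  have hS0' : 0 ≤ ∑ i ∈ Finset.Icc 1 (3 * k), Φ i :=
    Finset.sum_nonneg fun i _ => hpos i
  set T := ∑ i ∈ Finset.Icc 1 (3 * k), (2 * (i : ℝ) - 1) / ((4 * k : ℕ) : ℝ) ^ 2 * Φ i with hT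
  set S := ∑ i ∈ Finset.Icc 1 (4 * k), Φ i
  set S3 := ∑ i ∈ Finset.Icc 1 (3 * k), Φ i
  have hcast : ((3 * k : ℕ) : ℝ) = 3 * (k : ℝ) := by push_cast; ring
  rw [hcast] at hcheb
  -- hcheb : 3k * T ≤ (9k²/16k²) * S3
  have hTle : T ≤ 3 / 4 * S / ((4 * k : ℕ) : ℝ) := by
    have h4k : ((4 * k : ℕ) : ℝ) = 4 * (k : ℝ) := by push_cast; ring
    rw [h4k, le_div_iff₀ (by linarith)]
    have h1 : (3 * (k : ℝ)) ^ 2 / (4 * (k : ℝ)) ^ 2 * S3 ≤ 9 / 16 * S := by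
      have : (3 * (k : ℝ)) ^ 2 / (4 * (k : ℝ)) ^ 2 = 9 / 16 := by
        field_simp; ring
      rw [this]
      nlinarith
    nlinarith
  have hmain : T ≤ (1 - 4 * ε / 3) * S / ((4 * k : ℕ) : ℝ) := by
    have h4k : (0 : ℝ) < ((4 * k : ℕ) : ℝ) := by push_cast; linarith
    have : 3 / 4 * S ≤ (1 - 4 * ε / 3) * S := by nlinarith
    calc T ≤ 3 / 4 * S / ((4 * k : ℕ) : ℝ) := hTle
      _ ≤ (1 - 4 * ε / 3) * S / ((4 * k : ℕ) : ℝ) := by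
          gcongr
  refine ⟨hmain, ?_⟩
  have : (1 - 2 * (2 * ε / 3)) = (1 - 4 * ε / 3) := by ring
  rw [this]
  exact hmain
end
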